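/- Under the hypotheses of the previous construction (H satisfying the stated sign conditions), there exists ξ > 0 and α > 0 such that P̃ = P + ξH is positive definite and A(μ)ᵀP̃ + P̃A(μ) ≤ -αI for all μ ∈ [-(0.5-ε), 0.5-ε]. Consequently, the origin of ẋ = A(μ(t))x is globally uniformly exponentially stable over all measurable duty-cycle signals μ(t) taking values in [-(0.5-ε), 0.5-ε]. -/

import Mathlib

/-!
With `P = diag(L1, L2, C1, C2) / 2` one has `P A(μ) = (A₀ + μ E₀) / 2`, where `E₀` is skew and
`A₀` is skew up to its `(4,4)` entry `-1/R`; hence `A(μ)ᵀP + P A(μ) = -(1/R) e₄e₄ᵀ`: the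
energy `xᵀPx` is dissipated only through the resistor. The perturbation `ξH` supplies the missing
decay in the first three coordinates: in normalised entries the sign conditions on `H` say
that `A(μ)ᵀH + H A(μ)` has a negative definite `(x₁, x₂)` block and a negative `x₃²` coefficient,
uniformly for `|μ| ≤ 1/2 - ε`. Its remaining terms couple `x₄` to the other coordinates, and for
small `ξ` Young's inequality lets `-(1/R) x₄²` absorb them, while `P + ξH` stays positive definite.
A common quadratic Lyapunov function with strictly negative derivative gives exponential decay
along every duty-cycle signal.
-/

open Matrix Filter Topology

namespace Matrix

variable {ι : Type*} [Fintype ι]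

lemma dotProduct_self_nonneg (v : ι → ℝ) : 0 ≤ v ⬝ᵥ v :=
  Fintype.sum_nonneg fun i => mul_self_nonneg (v i)

lemma sq_le_dotProduct_self (v : ι → ℝ) (i : ι) : v i ^ 2 ≤ v ⬝ᵥ v := by
  simpa [dotProduct, sq] using Finset.single_le_sum (f := fun j => v j * v j)
    (fun j _ => mul_self_nonneg (v j)) (Finset.mem_univ i)

lemma sq_norm_le_dotProduct_self (v : ι → ℝ) : ‖v‖ ^ 2 ≤ v ⬝ᵥ v := by
  have hnorm : ‖v‖ ≤ √(v ⬝ᵥ v) := (pi_norm_le_iff_of_nonneg (Real.sqrt_nonneg _)).2 fun i => by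
    rw [Real.norm_eq_abs]
    exact Real.abs_le_sqrt (sq_le_dotProduct_self v i)
  calc ‖v‖ ^ 2 ≤ √(v ⬝ᵥ v) ^ 2 := by gcongr
    _ = v ⬝ᵥ v := Real.sq_sqrt (dotProduct_self_nonneg v)

lemma dotProduct_self_le_card_mul_sq_norm (v : ι → ℝ) :
    v ⬝ᵥ v ≤ Fintype.card ι * ‖v‖ ^ 2 := by
  calc v ⬝ᵥ v = ∑ i, ‖v i‖ ^ 2 := by simp [dotProduct, sq]
    _ ≤ ∑ _i : ι, ‖v‖ ^ 2 := Finset.sum_le_sum fun i _ => by gcongr; exact norm_le_pi_norm v i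
    _ = Fintype.card ι * ‖v‖ ^ 2 := by simp

lemma abs_dotProduct_mulVec_le (M : Matrix ι ι ℝ) (v : ι → ℝ) :
    |v ⬝ᵥ (M *ᵥ v)| ≤ (∑ i, ∑ j, |M i j|) * (v ⬝ᵥ v) := by
  have hv (i j : ι) : |v i| * |v j| ≤ v ⬝ᵥ v := by
    nlinarith [sq_le_dotProduct_self v i, sq_le_dotProduct_self v j, sq_abs (v i), sq_abs (v j),
      sq_nonneg (|v i| - |v j|)]
  calc |v ⬝ᵥ (M *ᵥ v)| = |∑ i, ∑ j, v i * (M i j * v j)| := by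
        simp only [dotProduct, mulVec, Finset.mul_sum]
    _ ≤ ∑ i, ∑ j, |M i j| * (v ⬝ᵥ v) := by
        refine (Finset.abs_sum_le_sum_abs _ _).trans (Finset.sum_le_sum fun i _ =>
          (Finset.abs_sum_le_sum_abs _ _).trans (Finset.sum_le_sum fun j _ => ?_))
        rw [abs_mul, abs_mul, mul_left_comm]
        exact mul_le_mul_of_nonneg_left (hv i j) (abs_nonneg _)
    _ = (∑ i, ∑ j, |M i j|) * (v ⬝ᵥ v) := by simp only [Finset.sum_mul]

lemma dotProduct_transpose_mul_add_mul_mulVec (B N : Matrix ι ι ℝ) (v : ι → ℝ) :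
    v ⬝ᵥ ((Bᵀ * N + N * B) *ᵥ v) = (B *ᵥ v) ⬝ᵥ (N *ᵥ v) + v ⬝ᵥ (N *ᵥ (B *ᵥ v)) := by
  rw [add_mulVec, dotProduct_add, ← mulVec_mulVec, ← mulVec_mulVec, dotProduct_mulVec,
    vecMul_transpose]

lemma IsSymm.transpose_mul_add_mul {N : Matrix ι ι ℝ} (hN : N.IsSymm) (B : Matrix ι ι ℝ) :
    (Bᵀ * N + N * B).IsSymm := by
  rw [IsSymm, transpose_add, transpose_mul, transpose_mul, transpose_transpose, hN.eq, add_comm]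

lemma posDef_of_le_dotProduct_mulVec {M : Matrix ι ι ℝ} (hM : M.IsSymm) {c : ℝ} (hc : 0 < c)
    (h : ∀ v, c * (v ⬝ᵥ v) ≤ v ⬝ᵥ (M *ᵥ v)) : M.PosDef := by
  refine posDef_iff_dotProduct_mulVec.2 ⟨isHermitian_iff_isSymm.2 hM, fun v hv => ?_⟩
  have hvv : 0 < v ⬝ᵥ v :=
    (dotProduct_self_nonneg v).lt_of_ne (Ne.symm (dotProduct_self_eq_zero.not.2 hv))
  simpa using (mul_pos hc hvv).trans_le (h v)

lemma posSemidef_neg_sub_smul_one [DecidableEq ι] {M : Matrix ι ι ℝ} (hM : M.IsSymm) {α : ℝ}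
    (h : ∀ v, v ⬝ᵥ (M *ᵥ v) ≤ -α * (v ⬝ᵥ v)) : (-M - α • 1).PosSemidef := by
  refine posSemidef_iff_dotProduct_mulVec.2 ⟨?_, fun v => ?_⟩
  · rw [isHermitian_iff_isSymm, IsSymm, transpose_sub, transpose_neg, transpose_smul,
      transpose_one, hM.eq]
  · rw [star_trivial, sub_mulVec, neg_mulVec, smul_mulVec, one_mulVec, dotProduct_sub,
      dotProduct_neg, dotProduct_smul, smul_eq_mul]
    linarith [h v]

lemma le_dotProduct_diagonal_mulVec [DecidableEq ι] {d : ι → ℝ} {m : ℝ} (h : ∀ i, m ≤ d i)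
    (v : ι → ℝ) :
    m * (v ⬝ᵥ v) ≤ v ⬝ᵥ (diagonal d *ᵥ v) := by
  simp only [dotProduct, mulVec_diagonal, Finset.mul_sum]
  exact Finset.sum_le_sum fun i _ => by nlinarith [h i, mul_self_nonneg (v i)]

end Matrix

lemma le_mul_exp_of_hasDerivAt_le {V V' : ℝ → ℝ} {k : ℝ} (hV : ∀ t, HasDerivAt V (V' t) t)
    (hV' : ∀ t, V' t ≤ -k * V t) {t : ℝ} (ht : 0 ≤ t) : V t ≤ V 0 * Real.exp (-k * t) := by
  have hW (s : ℝ) : HasDerivAt (fun s => V s * Real.exp (k * s))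
      (V' s * Real.exp (k * s) + V s * (Real.exp (k * s) * (k * 1))) s :=
    (hV s).mul ((hasDerivAt_id s).const_mul k).exp
  have hanti : Antitone fun s => V s * Real.exp (k * s) := by
    refine antitone_of_deriv_nonpos (fun s => (hW s).differentiableAt) fun s => ?_
    rw [(hW s).deriv]
    nlinarith [hV' s, Real.exp_pos (k * s)]
  have h := hanti ht
  simp only [mul_zero, Real.exp_zero, mul_one] at h
  calc V t = V t * Real.exp (k * t) * Real.exp (-k * t) := by
        rw [mul_assoc, ← Real.exp_add]; simp
    _ ≤ V 0 * Real.exp (-k * t) := by gcongr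

section Lyapunov

variable {ι S : Type*} [Fintype ι]

lemma HasDerivAt.dotProduct_mulVec {x : ℝ → ι → ℝ} {x' : ι → ℝ} {t : ℝ}
    (hx : HasDerivAt x x' t) (M : Matrix ι ι ℝ) :
    HasDerivAt (fun s => x s ⬝ᵥ (M *ᵥ x s)) (x' ⬝ᵥ (M *ᵥ x t) + x t ⬝ᵥ (M *ᵥ x')) t := by
  have hxi (i : ι) : HasDerivAt (fun s => x s i) (x' i) t := hasDerivAt_pi.1 hx i
  have hMx (i : ι) : HasDerivAt (fun s => (M *ᵥ x s) i) ((M *ᵥ x') i) t := by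
    simp only [mulVec, dotProduct]
    exact HasDerivAt.fun_sum fun j _ => (hxi j).const_mul (M i j)
  simp only [dotProduct, ← Finset.sum_add_distrib]
  exact HasDerivAt.fun_sum fun i _ => (hxi i).mul (hMx i)

lemma dotProduct_mulVec_le_mul_exp_of_lyapunov {A : S → Matrix ι ι ℝ} {s : Set S}
    {P : Matrix ι ι ℝ} {c α : ℝ} (hc : 0 < c) (hα : 0 ≤ α)
    (hhigh : ∀ v, v ⬝ᵥ (P *ᵥ v) ≤ c * (v ⬝ᵥ v))
    (hdecay : ∀ μ ∈ s, ∀ v, v ⬝ᵥ (((A μ)ᵀ * P + P * A μ) *ᵥ v) ≤ -α * (v ⬝ᵥ v))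
    {μ : ℝ → S} (hμ : ∀ t, μ t ∈ s) {x : ℝ → ι → ℝ} (hx : ∀ t, HasDerivAt x (A (μ t) *ᵥ x t) t)
    {t : ℝ} (ht : 0 ≤ t) :
    x t ⬝ᵥ (P *ᵥ x t) ≤ x 0 ⬝ᵥ (P *ᵥ x 0) * Real.exp (-(α / c) * t) := by
  refine le_mul_exp_of_hasDerivAt_le (fun s => (hx s).dotProduct_mulVec P) (fun s => ?_) ht
  rw [← dotProduct_transpose_mul_add_mul_mulVec]
  have h := hhigh (x s)
  calc _ ≤ -α * (x s ⬝ᵥ x s) := hdecay _ (hμ s) _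
    _ ≤ -(α / c) * (x s ⬝ᵥ (P *ᵥ x s)) := by
      rw [neg_mul, neg_mul, neg_le_neg_iff, div_mul_eq_mul_div, div_le_iff₀ hc]
      nlinarith

theorem exists_exp_bound_of_lyapunov [Nonempty ι] {A : S → Matrix ι ι ℝ} {s : Set S}
    {P : Matrix ι ι ℝ} {c₁ c₂ α : ℝ} (hc₁ : 0 < c₁) (hα : 0 < α)
    (hlow : ∀ v, c₁ * (v ⬝ᵥ v) ≤ v ⬝ᵥ (P *ᵥ v)) (hhigh : ∀ v, v ⬝ᵥ (P *ᵥ v) ≤ c₂ * (v ⬝ᵥ v))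
    (hdecay : ∀ μ ∈ s, ∀ v, v ⬝ᵥ (((A μ)ᵀ * P + P * A μ) *ᵥ v) ≤ -α * (v ⬝ᵥ v)) :
    ∃ K > (0 : ℝ), ∃ lam > (0 : ℝ), ∀ μ : ℝ → S, (∀ t, μ t ∈ s) → ∀ x : ℝ → ι → ℝ,
      (∀ t, HasDerivAt x (A (μ t) *ᵥ x t) t) →
        ∀ t ≥ (0 : ℝ), ‖x t‖ ≤ K * Real.exp (-lam * t) * ‖x 0‖ := by
  have hcard : (0 : ℝ) < Fintype.card ι := by exact_mod_cast Fintype.card_pos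
  have hc₂ : 0 < c₂ := by
    have h := (hlow fun _ => 1).trans (hhigh fun _ => 1)
    simp only [dotProduct, mul_one, Finset.sum_const, Finset.card_univ, nsmul_eq_mul] at h
    nlinarith
  refine ⟨√(Fintype.card ι * c₂ / c₁), by positivity, α / (2 * c₂), by positivity,
    fun μ hμ x hx t ht => ?_⟩
  have he : Real.exp (-(α / (2 * c₂)) * t) ^ 2 = Real.exp (-(α / c₂) * t) := by
    rw [← Real.exp_nat_mul]; congr 1; field_simp; ring
  have hxt : c₁ * ‖x t‖ ^ 2 ≤ c₂ * Fintype.card ι * ‖x 0‖ ^ 2 * Real.exp (-(α / c₂) * t) :=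
    calc c₁ * ‖x t‖ ^ 2 ≤ x t ⬝ᵥ (P *ᵥ x t) :=
          (mul_le_mul_of_nonneg_left (sq_norm_le_dotProduct_self _) hc₁.le).trans (hlow _)
      _ ≤ x 0 ⬝ᵥ (P *ᵥ x 0) * Real.exp (-(α / c₂) * t) :=
          dotProduct_mulVec_le_mul_exp_of_lyapunov hc₂ hα.le hhigh hdecay hμ hx ht
      _ ≤ c₂ * Fintype.card ι * ‖x 0‖ ^ 2 * Real.exp (-(α / c₂) * t) := by
        gcongr
        calc x 0 ⬝ᵥ (P *ᵥ x 0) ≤ c₂ * (x 0 ⬝ᵥ x 0) := hhigh _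
          _ ≤ c₂ * (Fintype.card ι * ‖x 0‖ ^ 2) := by
            gcongr; exact dotProduct_self_le_card_mul_sq_norm _
          _ = _ := by ring
  refine le_of_sq_le_sq ?_ (by positivity)
  rw [mul_pow, mul_pow, Real.sq_sqrt (by positivity), he, div_mul_eq_mul_div, div_mul_eq_mul_div,
    le_div_iff₀ hc₁]
  linarith

end Lyapunov

lemma two_mul_mul_le_mul_sq_add_div_mul_sq (c x y : ℝ) {δ : ℝ} (hδ : 0 < δ) :
    2 * c * x * y ≤ δ * x ^ 2 + c ^ 2 / δ * y ^ 2 := by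
  have h : δ * x ^ 2 + c ^ 2 / δ * y ^ 2 - 2 * c * x * y = (δ * x - c * y) ^ 2 / δ := by
    field_simp; ring
  nlinarith [div_nonneg (sq_nonneg (δ * x - c * y)) hδ.le]

lemma quadratic_le_neg_div {a b c d M : ℝ} (ha : a < 0) (hd : 0 ≤ d) (hdet : d ≤ a * c - b ^ 2)
    (hM : -(a + c) ≤ M) (x y : ℝ) :
    a * x ^ 2 + 2 * b * x * y + c * y ^ 2 ≤ -(d / M) * (x ^ 2 + y ^ 2) := by
  have hc : c ≤ 0 := by nlinarith [sq_nonneg b]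
  have hs : 0 < -(a + c) := by linarith
  -- `-(a + c)` times the form is `-(a x + b y)² - (b x + c y)² - (a c - b²)(x² + y²)`
  have key : -(a + c) * (a * x ^ 2 + 2 * b * x * y + c * y ^ 2) ≤ -(d * (x ^ 2 + y ^ 2)) := by
    nlinarith [sq_nonneg (a * x + b * y), sq_nonneg (b * x + c * y),
      mul_le_mul_of_nonneg_right hdet (by positivity : 0 ≤ x ^ 2 + y ^ 2)]
  have hdM : d / M ≤ d / -(a + c) := div_le_div_of_nonneg_left hd hs hM
  calc a * x ^ 2 + 2 * b * x * y + c * y ^ 2 ≤ -(d / -(a + c)) * (x ^ 2 + y ^ 2) := by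
        rw [neg_mul, div_mul_eq_mul_div, le_neg, div_le_iff₀ hs]; linarith
    _ ≤ -(d / M) * (x ^ 2 + y ^ 2) := by gcongr

lemma add_coupling_le {B q p₀ p₁ p₂ r β x₀ x₁ x₂ y : ℝ} (hβ : 0 < β)
    (hB : B ≤ -β * (x₀ ^ 2 + x₁ ^ 2)) (hq : q ≤ -β) :
    B + q * x₂ ^ 2 + 2 * y * (p₀ * x₀ + p₁ * x₁ + p₂ * x₂) + r * y ^ 2 ≤
      -(β / 2) * (x₀ ^ 2 + x₁ ^ 2 + x₂ ^ 2) + (2 * (p₀ ^ 2 + p₁ ^ 2 + p₂ ^ 2) / β + r) * y ^ 2 := by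
  have hδ : 0 < β / 2 := by positivity
  have h₀ := two_mul_mul_le_mul_sq_add_div_mul_sq p₀ x₀ y hδ
  have h₁ := two_mul_mul_le_mul_sq_add_div_mul_sq p₁ x₁ y hδ
  have h₂ := two_mul_mul_le_mul_sq_add_div_mul_sq p₂ x₂ y hδ
  have hq₂ : q * x₂ ^ 2 ≤ -β * x₂ ^ 2 := mul_le_mul_of_nonneg_right hq (sq_nonneg _)
  have e (p : ℝ) : p ^ 2 / (β / 2) = 2 * p ^ 2 / β := by field_simp
  rw [e] at h₀ h₁ h₂
  have : 2 * (p₀ ^ 2 + p₁ ^ 2 + p₂ ^ 2) / β * y ^ 2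
      = 2 * p₀ ^ 2 / β * y ^ 2 + 2 * p₁ ^ 2 / β * y ^ 2 + 2 * p₂ ^ 2 / β * y ^ 2 := by ring
  nlinarith

lemma exists_pos_mul_lt_and_mul_lt (a c : ℝ) {b d : ℝ} (hb : 0 < b) (hd : 0 < d) :
    ∃ ξ > 0, ξ * a < b ∧ ξ * c < d := by
  have hlim (a : ℝ) : Tendsto (fun ξ : ℝ => ξ * a) (𝓝[>] 0) (𝓝 0) :=
    ((continuous_mul_const a).tendsto' 0 0 (zero_mul a)).mono_left nhdsWithin_le_nhds
  exact (eventually_mem_nhdsWithin.and (((hlim a).eventually_lt_const hb).and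
    ((hlim c).eventually_lt_const hd))).exists

/-- The form `v ↦ v ⬝ᵥ ((A μ)ᵀ H + H A μ) v` in the normalised entries `a₁₃ = -h13/C1`,
`a₂₃ = -h23/C1`, `b = h24/C2`, `c₁₃ = -h13/L1`, `d₂₃ = -h23/L2`, `e = h14/L1`, `f = h24/L2`,
`p₀ = -h14/(C2 R)`, `p₁ = -h24/(C2 R)`; the choice of `h14` is what reduces the `x₁x₂`
coefficient to `2μ(a₁₃ + a₂₃)`. The coordinates `v 0, …, v 3` are `x₁, …, x₄`. -/
noncomputable def couplingForm (a₁₃ a₂₃ b c₁₃ d₂₃ e f p₀ p₁ μ : ℝ) (v : Fin 4 → ℝ) : ℝ :=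
  (-2 * a₁₃ * (1 / 2 - μ) * v 0 ^ 2 + 2 * (μ * (a₁₃ + a₂₃)) * v 0 * v 1
      + (2 * a₂₃ * (1 / 2 + μ) - 2 * b) * v 1 ^ 2)
    + 2 * (c₁₃ * (1 / 2 - μ) - d₂₃ * (1 / 2 + μ)) * v 2 ^ 2
    + 2 * v 3 * (p₀ * v 0 + p₁ * v 1 + (f * (1 / 2 + μ) - e * (1 / 2 - μ) - d₂₃) * v 2)
    + 2 * f * v 3 ^ 2

lemma exists_couplingForm_le {ε a₁₃ a₂₃ b c₁₃ d₂₃ : ℝ} (e f p₀ p₁ : ℝ) (hε : 0 < ε)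
    (ha₁₃ : 0 < a₁₃) (ha₂₃ : 0 ≤ a₂₃) (hb : 0 ≤ b) (hc₁₃ : 0 ≤ c₁₃) (hd₂₃ : 0 ≤ d₂₃)
    (hcd : (1 - ε) * c₁₃ < ε * d₂₃)
    (hdet : (a₁₃ - a₂₃) ^ 2 * (1 / 2 - ε) ^ 2 + a₁₃ * a₂₃ < 4 * a₁₃ * ε * b) :
    ∃ β > 0, ∃ G, ∀ μ ∈ Set.Icc (-(1 / 2 - ε)) (1 / 2 - ε), ∀ v,
      couplingForm a₁₃ a₂₃ b c₁₃ d₂₃ e f p₀ p₁ μ v ≤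
        -β * (v 0 ^ 2 + v 1 ^ 2 + v 2 ^ 2) + G * v 3 ^ 2 := by
  set d := 4 * a₁₃ * ε * b - a₁₃ * a₂₃ - (a₁₃ - a₂₃) ^ 2 * (1 / 2 - ε) ^ 2 with hd_def
  set M := 2 * a₁₃ + 2 * b
  set β := min (d / M) (2 * (ε * d₂₃ - (1 - ε) * c₁₃))
  set K := |f| + |e| + |d₂₃|
  have hd : 0 < d := by linarith
  have hβ : 0 < β := lt_min (div_pos hd (by positivity)) (by linarith)
  refine ⟨β / 2, by positivity, 2 * (p₀ ^ 2 + p₁ ^ 2 + K ^ 2) / β + 2 * f, ?_⟩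
  rintro μ ⟨hμ₁, hμ₂⟩ v
  have hblock := quadratic_le_neg_div (a := -2 * a₁₃ * (1 / 2 - μ)) (b := μ * (a₁₃ + a₂₃))
    (c := 2 * a₂₃ * (1 / 2 + μ) - 2 * b) (M := M) (by nlinarith) hd.le
    (by nlinarith [mul_nonneg (mul_nonneg ha₁₃.le hb) (by linarith : 0 ≤ 1 / 2 - μ - ε),
      mul_nonneg (sq_nonneg (a₁₃ - a₂₃)) (by nlinarith : 0 ≤ (1 / 2 - ε) ^ 2 - μ ^ 2)])
    (by nlinarith) (v 0) (v 1)
  have hq₃₃ : 2 * (c₁₃ * (1 / 2 - μ) - d₂₃ * (1 / 2 + μ)) ≤ -β :=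
    (by nlinarith : _ ≤ -(2 * (ε * d₂₃ - (1 - ε) * c₁₃))).trans (neg_le_neg (min_le_right _ _))
  have hq₃₄ : |f * (1 / 2 + μ) - e * (1 / 2 - μ) - d₂₃| ≤ K := by
    have hf : |f * (1 / 2 + μ)| ≤ |f| := by
      rw [abs_mul]
      exact mul_le_of_le_one_right (abs_nonneg f) (abs_le.2 ⟨by linarith, by linarith⟩)
    have he : |e * (1 / 2 - μ)| ≤ |e| := by
      rw [abs_mul]
      exact mul_le_of_le_one_right (abs_nonneg e) (abs_le.2 ⟨by linarith, by linarith⟩)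
    refine abs_le.2 ⟨?_, ?_⟩ <;>
      linarith [abs_le.1 hf, abs_le.1 he, neg_abs_le d₂₃, le_abs_self d₂₃]
  have hK : (f * (1 / 2 + μ) - e * (1 / 2 - μ) - d₂₃) ^ 2 ≤ K ^ 2 := by
    simpa only [sq_abs] using pow_le_pow_left₀ (abs_nonneg _) hq₃₄ 2
  refine (add_coupling_le hβ (hblock.trans ?_) hq₃₃).trans ?_
  · gcongr; exact min_le_left _ _
  · gcongr

noncomputable def averagedMatrix (L1 L2 C1 C2 R μ : ℝ) : Matrix (Fin 4) (Fin 4) ℝ :=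
  !![0, 0, (μ - 1 / 2) / L1, 0; 0, 0, (1 / 2 + μ) / L2, 1 / L2;
    (1 / 2 - μ) / C1, (-1 / 2 - μ) / C1, 0, 0; 0, -1 / C2, 0, -1 / (R * C2)]

lemma averagedMatrix_eq {L1 L2 C1 C2 R : ℝ} {P A₀ E₀ : Matrix (Fin 4) (Fin 4) ℝ} (hL1 : L1 ≠ 0)
    (hL2 : L2 ≠ 0) (hC1 : C1 ≠ 0) (hC2 : C2 ≠ 0)
    (hP : P = (1 / 2 : ℝ) • diagonal ![L1, L2, C1, C2])
    (hA₀ : A₀ = !![0, 0, -1 / 2, 0; 0, 0, 1 / 2, 1; 1 / 2, -1 / 2, 0, 0; 0, -1, 0, -1 / R])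
    (hE₀ : E₀ = !![0, 0, 1, 0; 0, 0, 1, 0; -1, -1, 0, 0; 0, 0, 0, 0]) (μ : ℝ) :
    (1 / 2 : ℝ) • (P⁻¹ * (A₀ + μ • E₀)) = averagedMatrix L1 L2 C1 C2 R μ := by
  have hPinv : P⁻¹ = diagonal ![2 / L1, 2 / L2, 2 / C1, 2 / C2] := by
    refine inv_eq_right_inv ?_
    rw [hP, smul_mul_assoc, diagonal_mul_diagonal, ← diagonal_smul, ← diagonal_one]
    congr 1
    ext i
    fin_cases i <;> simp [field]
  rw [hPinv, hA₀, hE₀]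
  ext i j
  fin_cases i <;> fin_cases j <;> simp [averagedMatrix, diagonal_mul, field] <;> ring

lemma dotProduct_lyapunov_eq {L1 L2 C1 C2 R h13 h14 h23 h24 : ℝ} {P H : Matrix (Fin 4) (Fin 4) ℝ}
    (hL1 : L1 ≠ 0) (hL2 : L2 ≠ 0) (hC1 : C1 ≠ 0) (hC2 : C2 ≠ 0) (hR : R ≠ 0)
    (hP : P = (1 / 2 : ℝ) • diagonal ![L1, L2, C1, C2])
    (hH : H = !![0, 0, h13, h14; 0, 0, h23, h24; h13, h23, 0, 0; h14, h24, 0, 0])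
    (hh14 : h14 = -(C2 * (h13 - h23)) / (2 * C1)) (ξ μ : ℝ) (v : Fin 4 → ℝ) :
    v ⬝ᵥ (((averagedMatrix L1 L2 C1 C2 R μ)ᵀ * (P + ξ • H) +
        (P + ξ • H) * averagedMatrix L1 L2 C1 C2 R μ) *ᵥ v) =
      -(1 / R) * v 3 ^ 2 + ξ * couplingForm (-h13 / C1) (-h23 / C1) (h24 / C2) (-h13 / L1)
        (-h23 / L2) (h14 / L1) (h24 / L2) (-h14 / (C2 * R)) (-h24 / (C2 * R)) μ v := by
  subst hP hH hh14
  simp only [averagedMatrix, couplingForm, dotProduct, mulVec, mul_apply, Matrix.add_apply,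
    transpose_apply, Matrix.smul_apply, diagonal_apply, Fin.sum_univ_four, Fin.isValue, one_div,
    of_apply, cons_val', cons_val_zero, cons_val_fin_one, ↓reduceIte, Nat.succ_eq_add_one,
    Nat.reduceAdd, smul_eq_mul, mul_zero, add_zero, zero_mul, cons_val_one, one_ne_zero, cons_val,
    Fin.reduceEq, zero_add, zero_ne_one, neg_mul]
  field_simp
  ring

lemma exists_couplingForm_le_of_sign_conditions {L1 L2 C1 C2 R ε h13 h14 h23 h24 : ℝ}
    (hL1 : 0 < L1) (hL2 : 0 < L2) (hC1 : 0 < C1) (hC2 : 0 < C2) (hε : 0 < ε) (hh13 : h13 < 0)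
    (hh23 : h23 < (L2 / L1) * ((1 - ε) / ε) * h13) (h23_neg : h23 < 0)
    (hh24 : h24 > (C2 / C1) * (((h23 - h13) ^ 2 * (1 / 2 - ε) ^ 2 + h13 * h23) / (-h13 * 4 * ε)))
    (h24_pos : 0 < h24) :
    ∃ β > 0, ∃ G, ∀ μ ∈ Set.Icc (-(1 / 2 - ε)) (1 / 2 - ε), ∀ v,
      couplingForm (-h13 / C1) (-h23 / C1) (h24 / C2) (-h13 / L1) (-h23 / L2) (h14 / L1)
          (h24 / L2) (-h14 / (C2 * R)) (-h24 / (C2 * R)) μ v ≤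
        -β * (v 0 ^ 2 + v 1 ^ 2 + v 2 ^ 2) + G * v 3 ^ 2 := by
  have h13_ne := hh13.ne
  have hε_ne := hε.ne'
  have hC1_ne := hC1.ne'
  have hcd : (1 - ε) * (-h13 / L1) < ε * (-h23 / L2) :=
    calc (1 - ε) * (-h13 / L1) = -(ε / L2 * ((L2 / L1) * ((1 - ε) / ε) * h13)) := by
          field_simp
      _ < -(ε / L2 * h23) := neg_lt_neg (mul_lt_mul_of_pos_left hh23 (div_pos hε hL2))
      _ = ε * (-h23 / L2) := by ring
  have hk : 0 < 4 * -h13 * ε / (C1 * C2) :=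
    div_pos (mul_pos (by linarith) hε) (mul_pos hC1 hC2)
  have hdet : (-h13 / C1 - -h23 / C1) ^ 2 * (1 / 2 - ε) ^ 2 + -h13 / C1 * (-h23 / C1) <
      4 * (-h13 / C1) * ε * (h24 / C2) :=
    calc _ = 4 * -h13 * ε / (C1 * C2) *
          ((C2 / C1) * (((h23 - h13) ^ 2 * (1 / 2 - ε) ^ 2 + h13 * h23) / (-h13 * 4 * ε))) := by
          field_simp; ring
      _ < 4 * -h13 * ε / (C1 * C2) * h24 := mul_lt_mul_of_pos_left hh24 hk
      _ = _ := by ring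
  exact exists_couplingForm_le _ _ _ _ hε (div_pos (neg_pos.2 hh13) hC1)
    (div_nonneg (neg_nonneg.2 h23_neg.le) hC1.le) (div_nonneg h24_pos.le hC2.le)
    (div_nonneg (neg_nonneg.2 hh13.le) hL1.le) (div_nonneg (neg_nonneg.2 h23_neg.le) hL2.le)
    hcd hdet

theorem exists_common_lyapunov {L1 L2 C1 C2 R ε h13 h14 h23 h24 : ℝ}
    {P H : Matrix (Fin 4) (Fin 4) ℝ}
    (hL1 : 0 < L1) (hL2 : 0 < L2) (hC1 : 0 < C1) (hC2 : 0 < C2) (hR : 0 < R)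
    (hP : P = (1 / 2 : ℝ) • diagonal ![L1, L2, C1, C2])
    (hH : H = !![0, 0, h13, h14; 0, 0, h23, h24; h13, h23, 0, 0; h14, h24, 0, 0])
    (hε : 0 < ε) (hh13 : h13 < 0) (hh14 : h14 = -(C2 * (h13 - h23)) / (2 * C1))
    (hh23 : h23 < (L2 / L1) * ((1 - ε) / ε) * h13) (h23_neg : h23 < 0)
    (hh24 : h24 > (C2 / C1) * (((h23 - h13) ^ 2 * (1 / 2 - ε) ^ 2 + h13 * h23) / (-h13 * 4 * ε)))
    (h24_pos : 0 < h24) :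
    ∃ ξ > (0 : ℝ), ∃ c > (0 : ℝ), ∃ α > (0 : ℝ),
      (∀ v, c * (v ⬝ᵥ v) ≤ v ⬝ᵥ ((P + ξ • H) *ᵥ v)) ∧
      ∀ μ ∈ Set.Icc (-(1 / 2 - ε)) (1 / 2 - ε), ∀ v,
        v ⬝ᵥ (((averagedMatrix L1 L2 C1 C2 R μ)ᵀ * (P + ξ • H) +
          (P + ξ • H) * averagedMatrix L1 L2 C1 C2 R μ) *ᵥ v) ≤ -α * (v ⬝ᵥ v) := by
  obtain ⟨β, hβ, G, hQ⟩ := exists_couplingForm_le_of_sign_conditions (R := R) (h14 := h14)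
    hL1 hL2 hC1 hC2 hε hh13 hh23 h23_neg hh24 h24_pos
  set m := min (min L1 L2) (min C1 C2)
  have hm : 0 < m := by positivity
  obtain ⟨ξ, hξ, hξH, hξG⟩ := exists_pos_mul_lt_and_mul_lt (∑ i, ∑ j, |H i j|) G
    (by positivity : 0 < m / 4) (by positivity : 0 < 1 / R / 2)
  refine ⟨ξ, hξ, m / 4, by positivity, min (ξ * β) (1 / R / 2),
    lt_min (mul_pos hξ hβ) (by positivity), fun v => ?_, fun μ hμ v => ?_⟩
  · have hPv : m * (v ⬝ᵥ v) ≤ v ⬝ᵥ (diagonal ![L1, L2, C1, C2] *ᵥ v) := by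
      refine le_dotProduct_diagonal_mulVec (fun i => ?_) v
      fin_cases i
      exacts [(min_le_left _ _).trans (min_le_left _ _), (min_le_left _ _).trans (min_le_right _ _),
        (min_le_right _ _).trans (min_le_left _ _), (min_le_right _ _).trans (min_le_right _ _)]
    have hHv := (abs_le.1 (abs_dotProduct_mulVec_le H v)).1
    have hvv := dotProduct_self_nonneg v
    rw [hP, add_mulVec, dotProduct_add, smul_mulVec, dotProduct_smul, smul_mulVec,
      dotProduct_smul, smul_eq_mul, smul_eq_mul]
    nlinarith [mul_le_mul_of_nonneg_left hHv hξ.le, mul_le_mul_of_nonneg_right hξH.le hvv]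
  · rw [dotProduct_lyapunov_eq hL1.ne' hL2.ne' hC1.ne' hC2.ne' hR.ne' hP hH hh14]
    have hvv : v ⬝ᵥ v = (v 0 ^ 2 + v 1 ^ 2 + v 2 ^ 2) + v 3 ^ 2 := by
      simp only [dotProduct, Fin.sum_univ_four, sq]
    rw [hvv]
    have hX : 0 ≤ v 0 ^ 2 + v 1 ^ 2 + v 2 ^ 2 := by positivity
    have hY : 0 ≤ v 3 ^ 2 := sq_nonneg _
    nlinarith [mul_le_mul_of_nonneg_left (hQ μ hμ v) hξ.le,
      mul_le_mul_of_nonneg_right (min_le_left (ξ * β) (1 / R / 2)) hX,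
      mul_le_mul_of_nonneg_right (min_le_right (ξ * β) (1 / R / 2)) hY,
      mul_le_mul_of_nonneg_right hξG.le hY]

/-- existence of a common quadratic Lyapunov matrix P̃ = P + ξH with
A(μ)ᵀP̃ + P̃A(μ) ≤ -αI for all μ ∈ [-(0.5-ε), 0.5-ε], and the resulting global
uniform exponential stability of ẋ = A(μ(t))x. -/
theorem averaged_model_GUES
    (L1 L2 C1 C2 R : ℝ) (hL1 : 0 < L1) (hL2 : 0 < L2) (hC1 : 0 < C1)
    (hC2 : 0 < C2) (hR : 0 < R)
    (P : Matrix (Fin 4) (Fin 4) ℝ) (hP : P = (1/2 : ℝ) • Matrix.diagonal ![L1, L2, C1, C2])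
    (A0q E0q : Matrix (Fin 4) (Fin 4) ℝ)
    (hA0q : A0q = !![0,0,-1/2,0; 0,0,1/2,1; 1/2,-1/2,0,0; 0,-1,0,-1/R])
    (hE0q : E0q = !![0,0,1,0; 0,0,1,0; -1,-1,0,0; 0,0,0,0])
    (A : ℝ → Matrix (Fin 4) (Fin 4) ℝ)
    (hA : ∀ μ, A μ = (1/2 : ℝ) • (P⁻¹ * (A0q + μ • E0q)))
    (ε : ℝ) (hε : 0 < ε ∧ ε ≤ 0.5)
    (h13 h14 h23 h24 : ℝ)
    (hh13 : h13 < 0)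
    (hh14 : h14 = -(C2 * (h13 - h23)) / (2 * C1))
    (hh23 : h23 < (L2 / L1) * ((1 - ε) / ε) * h13 ∧ (L2 / L1) * ((1 - ε) / ε) * h13 < 0)
    (hh24 : h24 > (C2 / C1) * (((h23 - h13)^2 * (0.5 - ε)^2 + h13 * h23) / (-h13 * 4 * ε)) ∧
            (C2 / C1) * (((h23 - h13)^2 * (0.5 - ε)^2 + h13 * h23) / (-h13 * 4 * ε)) > 0)
    (H : Matrix (Fin 4) (Fin 4) ℝ)
    (hH : H = !![0,0,h13,h14; 0,0,h23,h24; h13,h23,0,0; h14,h24,0,0]) :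
    (∃ ξ > (0:ℝ), ∃ α > (0:ℝ),
      (P + ξ • H).PosDef ∧
      (∀ μ ∈ Set.Icc (-(0.5 - ε)) (0.5 - ε),
        (-( (A μ)ᵀ * (P + ξ • H) + (P + ξ • H) * A μ) - α • (1 : Matrix (Fin 4) (Fin 4) ℝ)).PosSemidef)) ∧
    (∃ K > (0:ℝ), ∃ lam > (0:ℝ),
      ∀ μ : ℝ → ℝ, Measurable μ → (∀ t, μ t ∈ Set.Icc (-(0.5 - ε)) (0.5 - ε)) →
        ∀ x : ℝ → Fin 4 → ℝ,
          (∀ t, HasDerivAt x (A (μ t) *ᵥ x t) t) →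
          ∀ t ≥ (0:ℝ), ‖x t‖ ≤ K * Real.exp (-lam * t) * ‖x 0‖) := by
  have h05 : (0.5 : ℝ) = 1 / 2 := by norm_num
  rw [h05] at hh24 ⊢
  have hAμ (μ : ℝ) : A μ = averagedMatrix L1 L2 C1 C2 R μ := by
    rw [hA, averagedMatrix_eq hL1.ne' hL2.ne' hC1.ne' hC2.ne' hP hA0q hE0q]
  simp only [hAμ]
  obtain ⟨ξ, hξ, c, hc, α, hα, hlow, hdecay⟩ := exists_common_lyapunov hL1 hL2 hC1 hC2 hR hP hH
    hε.1 hh13 hh14 hh23.1 (hh23.1.trans hh23.2) hh24.1 (hh24.2.trans hh24.1)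
  have hsymm : (P + ξ • H).IsSymm := by
    subst hP hH
    exact ((isSymm_diagonal _).smul _).add
      ((IsSymm.ext fun i j => by fin_cases i <;> fin_cases j <;> rfl).smul ξ)
  obtain ⟨K, hK, lam, hlam, hstable⟩ := exists_exp_bound_of_lyapunov hc hα hlow
    (fun v => (le_abs_self _).trans (abs_dotProduct_mulVec_le _ v)) hdecay
  exact ⟨⟨ξ, hξ, α, hα, posDef_of_le_dotProduct_mulVec hsymm hc hlow,
    fun μ hμ => posSemidef_neg_sub_smul_one (hsymm.transpose_mul_add_mul _) (hdecay μ hμ)⟩,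
    K, hK, lam, hlam, fun μ _ => hstable μ⟩
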